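/- (Lemma: recursion for the momentum drift 𝒟) Under the lower-bound, mixing, smoothness, and bounded-variance assumptions, for every round r ≥ 0 the Momentum Tracking iterates satisfy 𝒟^{(r+1)} ≤ (2β²/(1+β²)) 𝒟^{(r)} + (32L⁴η²/(1−β²)) Ξ^{(r)} + (16L²β²η²/(1−β²)) E‖ū^{(r)}‖² + (32L²η²/(1−β²)) E‖∇f(x̄^{(r)})‖² + 8L²σ²η²/(N(1−β²)). -/

import Mathlib

open MeasureTheory
open scoped BigOperators

noncomputable section

/-- Problem data and standing assumptions (lower bound, mixing, smoothness) for
decentralized optimization over `N` nodes in `ℝ^d`. -/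
structure MTProblem (N d : ℕ) (Ω : Type) [mΩ : MeasurableSpace Ω] where
  /-- Probability measure driving the stochastic gradients. -/
  μ : Measure Ω
  prob : IsProbabilityMeasure μ
  fstar : ℝ
  L : ℝ
  σ : ℝ
  p : ℝ
  β : ℝ
  /-- Local objectives `f_i`. -/
  f : Fin N → EuclideanSpace ℝ (Fin d) → ℝ
  /-- Local gradients `∇f_i`. -/
  g : Fin N → EuclideanSpace ℝ (Fin d) → EuclideanSpace ℝ (Fin d)
  /-- Mixing matrix. -/
  W : Fin N → Fin N → ℝ
  /-- Common initial parameter. -/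
  x0 : EuclideanSpace ℝ (Fin d)
  hN : 0 < N
  hβ0 : 0 ≤ β
  hβ1 : β < 1
  hL : 0 < L
  hp0 : 0 < p
  hp1 : p ≤ 1
  hgrad : ∀ i v, HasGradientAt (f i) (g i v) v
  /-- Lower bound: `f⋆ ≤ f(x)` for all `x`. -/
  hlb : ∀ v, fstar ≤ (N : ℝ)⁻¹ * ∑ i, f i v
  /-- `L`-smoothness of each `f_i`. -/
  hsmooth : ∀ i v w, ‖g i v - g i w‖ ≤ L * ‖v - w‖
  hWsymm : ∀ i j, W i j = W j i
  hWrow : ∀ i, ∑ j, W i j = 1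
  hWcol : ∀ j, ∑ i, W i j = 1
  /-- Spectral gap: `‖XW − X̄‖_F² ≤ (1−p)‖X − X̄‖_F²`. -/
  hmix : ∀ X : Fin N → EuclideanSpace ℝ (Fin d),
    ∑ j, ‖(∑ i, W i j • X i) - (N : ℝ)⁻¹ • ∑ i, X i‖ ^ 2
      ≤ (1 - p) * ∑ j, ‖X j - (N : ℝ)⁻¹ • ∑ i, X i‖ ^ 2

namespace MTProblem

variable {N d : ℕ} {Ω : Type} [mΩ : MeasurableSpace Ω]

/-- Global objective `f = (1/N) ∑_i f_i`. -/
def F (P : MTProblem N d Ω) (v : EuclideanSpace ℝ (Fin d)) : ℝ :=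
  (N : ℝ)⁻¹ * ∑ i, P.f i v

/-- Gradient of the global objective, `∇f = (1/N) ∑_i ∇f_i`. -/
def gradF (P : MTProblem N d Ω) (v : EuclideanSpace ℝ (Fin d)) : EuclideanSpace ℝ (Fin d) :=
  (N : ℝ)⁻¹ • ∑ i, P.g i v

end MTProblem

/-- A run of the Momentum Tracking algorithm: trajectories `x, u, c`, realized
stochastic gradients `G r i = ∇F_i(x_i^{(r)}; ξ_i^{(r)})`, together with the update
rules, the standard initialization, and the stochastic-gradient assumptions
(unbiasedness, bounded variance, independence across nodes and rounds in the form
of orthogonality of the noises). -/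
structure MTRun {N d : ℕ} {Ω : Type} [mΩ : MeasurableSpace Ω] (P : MTProblem N d Ω) where
  /-- Step size. -/
  η : ℝ
  hη : 0 < η
  x : ℕ → Fin N → Ω → EuclideanSpace ℝ (Fin d)
  u : ℕ → Fin N → Ω → EuclideanSpace ℝ (Fin d)
  c : ℕ → Fin N → Ω → EuclideanSpace ℝ (Fin d)
  G : ℕ → Fin N → Ω → EuclideanSpace ℝ (Fin d)
  /-- Filtration of the information available at each round. -/
  ℱ : MeasureTheory.Filtration ℕ mΩ
  hx0 : ∀ i, x 0 i = fun _ => P.x0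
  hu0 : ∀ i ω, u 0 i ω = (1 - P.β)⁻¹ • (G 0 i ω - (N : ℝ)⁻¹ • ∑ j, G 0 j ω)
  hc0 : ∀ i, c 0 i = u 0 i
  hu : ∀ r i ω, u (r + 1) i ω = P.β • u r i ω + G r i ω
  hx : ∀ r i ω, x (r + 1) i ω
      = (∑ j, P.W i j • x r j ω) - η • (u (r + 1) i ω - c r i ω)
  hc : ∀ r i ω, c (r + 1) i ω
      = (∑ j, P.W i j • (c r j ω - u (r + 1) j ω)) + u (r + 1) i ω
  hmeas : ∀ r i, MemLp (G r i) 2 P.μ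
  hadapted_x : ∀ r i, StronglyMeasurable[ℱ r] (x r i)
  hadapted_G : ∀ r i, StronglyMeasurable[ℱ (r + 1)] (G r i)
  /-- Unbiasedness: `E[∇F_i(x_i^{(r)};ξ) | ℱ_r] = ∇f_i(x_i^{(r)})`. -/
  hunbiased : ∀ r i,
    MeasureTheory.condExp (ℱ r) P.μ (G r i) =ᵐ[P.μ] fun ω => P.g i (x r i ω)
  /-- Bounded variance. -/
  hvar : ∀ r i, ∫ ω, ‖G r i ω - P.g i (x r i ω)‖ ^ 2 ∂P.μ ≤ P.σ ^ 2
  /-- Independence across nodes and rounds (orthogonality of the noises). -/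
  horth : ∀ r s : ℕ, ∀ i j : Fin N, (r, i) ≠ (s, j) →
    ∫ ω, (inner ℝ (G r i ω - P.g i (x r i ω)) (G s j ω - P.g j (x s j ω)) : ℝ) ∂P.μ = 0

namespace MTRun

variable {N d : ℕ} {Ω : Type} [mΩ : MeasurableSpace Ω] {P : MTProblem N d Ω}

/-- Node-average of the parameters, `x̄^{(r)}`. -/
def xbar (S : MTRun P) (r : ℕ) (ω : Ω) : EuclideanSpace ℝ (Fin d) :=
  (N : ℝ)⁻¹ • ∑ i, S.x r i ω

/-- Node-average of the momenta, `ū^{(r)}`. -/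
def ubar (S : MTRun P) (r : ℕ) (ω : Ω) : EuclideanSpace ℝ (Fin d) :=
  (N : ℝ)⁻¹ • ∑ i, S.u r i ω

/-- Node-average of the correction variables, `c̄^{(r)}`. -/
def cbar (S : MTRun P) (r : ℕ) (ω : Ω) : EuclideanSpace ℝ (Fin d) :=
  (N : ℝ)⁻¹ • ∑ i, S.c r i ω

/-- Auxiliary average `z̄^{(r)}`. -/
def zbar (S : MTRun P) : ℕ → Ω → EuclideanSpace ℝ (Fin d)
  | 0 => S.xbar 0
  | r + 1 => fun ω =>
      (1 - P.β)⁻¹ • S.xbar (r + 1) ω - (P.β * (1 - P.β)⁻¹) • S.xbar r ω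

/-- Auxiliary sequence `d_i^{(r)}`. -/
def dseq (S : MTRun P) : ℕ → Fin N → Ω → EuclideanSpace ℝ (Fin d)
  | 0 => fun i ω => (1 - P.β)⁻¹ • (P.g i (S.xbar 0 ω) - P.gradF (S.xbar 0 ω))
  | r + 1 => fun i ω => P.β • dseq S r i ω + P.g i (S.xbar r ω)

/-- Auxiliary sequence `e_i^{(r)}`. -/
def eseq (S : MTRun P) : ℕ → Fin N → Ω → EuclideanSpace ℝ (Fin d)
  | 0 => fun _ _ => 0
  | r + 1 => fun i ω => P.β • eseq S r i ω + P.gradF (S.xbar r ω)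

/-- Node-average `d̄^{(r)}`. -/
def dbar (S : MTRun P) (r : ℕ) (ω : Ω) : EuclideanSpace ℝ (Fin d) :=
  (N : ℝ)⁻¹ • ∑ i, S.dseq r i ω

/-- Node-average `ē^{(r)}`. -/
def ebar (S : MTRun P) (r : ℕ) (ω : Ω) : EuclideanSpace ℝ (Fin d) :=
  (N : ℝ)⁻¹ • ∑ i, S.eseq r i ω

/-- Consensus distance `Ξ^{(r)} = (1/N) E‖X^{(r)} − X̄^{(r)}‖_F²`. -/
def Xi (S : MTRun P) (r : ℕ) : ℝ :=
  (N : ℝ)⁻¹ * ∫ ω, (∑ i, ‖S.x r i ω - S.xbar r ω‖ ^ 2) ∂P.μ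

/-- Tracking error `ℰ^{(r)} = (1/N) E‖D^{(r+1)} − C^{(r)} − E^{(r+1)}‖_F²`. -/
def EE (S : MTRun P) (r : ℕ) : ℝ :=
  (N : ℝ)⁻¹ *
    ∫ ω, (∑ i, ‖S.dseq (r + 1) i ω - S.c r i ω - S.eseq (r + 1) i ω‖ ^ 2) ∂P.μ

/-- Momentum drift `𝒟^{(r)} = (1/N) E‖D^{(r+1)} − D^{(r)} − E^{(r+1)} + E^{(r)}‖_F²`. -/
def DD (S : MTRun P) (r : ℕ) : ℝ :=
  (N : ℝ)⁻¹ *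
    ∫ ω, (∑ i,
      ‖S.dseq (r + 1) i ω - S.dseq r i ω - S.eseq (r + 1) i ω + S.eseq r i ω‖ ^ 2) ∂P.μ

end MTRun

namespace MTRun

variable {N d : ℕ} {Ω : Type} [mΩ : MeasurableSpace Ω] {P : MTProblem N d Ω} (S : MTRun P)

/-- Stochastic gradient noise. -/
def noise (r : ℕ) (i : Fin N) (ω : Ω) : EuclideanSpace ℝ (Fin d) :=
  S.G r i ω - P.g i (S.x r i ω)

/-- Average noise. -/
def nbar (r : ℕ) (ω : Ω) : EuclideanSpace ℝ (Fin d) :=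
  (N : ℝ)⁻¹ • ∑ i, S.noise r i ω

/-- Consensus-gradient error. -/
def mvec (r : ℕ) (ω : Ω) : EuclideanSpace ℝ (Fin d) :=
  (N : ℝ)⁻¹ • ∑ i, (P.g i (S.x r i ω) - P.g i (S.xbar r ω))

/-- Predictable part of `ū^{(r+1)}`. -/
def svec (r : ℕ) (ω : Ω) : EuclideanSpace ℝ (Fin d) :=
  P.β • S.ubar r ω + P.gradF (S.xbar r ω) + S.mvec r ω

/-- Momentum drift increment. -/
def Δv (r : ℕ) (i : Fin N) (ω : Ω) : EuclideanSpace ℝ (Fin d) :=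
  S.dseq (r+1) i ω - S.dseq r i ω - S.eseq (r+1) i ω + S.eseq r i ω

/-- Smoothness increment. -/
def hvec (r : ℕ) (i : Fin N) (ω : Ω) : EuclideanSpace ℝ (Fin d) :=
  (P.g i (S.xbar (r+1) ω) - P.gradF (S.xbar (r+1) ω))
    - (P.g i (S.xbar r ω) - P.gradF (S.xbar r ω))

lemma hNpos (P : MTProblem N d Ω) : (0:ℝ) < (N:ℝ) := by exact_mod_cast P.hN

lemma sum_u0 (ω : Ω) : ∑ i, S.u 0 i ω = 0 := by
  have hN : ((N:ℝ)) ≠ 0 := (hNpos P).ne'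
  simp only [S.hu0]
  rw [← Finset.smul_sum, Finset.sum_sub_distrib, Finset.sum_const, Finset.card_univ,
    Fintype.card_fin]
  rw [← Nat.cast_smul_eq_nsmul ℝ, smul_smul, mul_inv_cancel₀ hN, one_smul, sub_self, smul_zero]

lemma sum_c_eq_zero (r : ℕ) (ω : Ω) : ∑ i, S.c r i ω = 0 := by
  induction r with
  | zero => simp only [S.hc0]; exact S.sum_u0 ω
  | succ r ih =>
    simp only [S.hc]
    rw [Finset.sum_add_distrib, Finset.sum_comm]
    have : ∀ j, ∑ i, P.W i j • (S.c r j ω - S.u (r+1) j ω)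
        = S.c r j ω - S.u (r+1) j ω := by
      intro j
      rw [← Finset.sum_smul, P.hWcol j, one_smul]
    rw [Finset.sum_congr rfl fun j _ => this j, Finset.sum_sub_distrib, ih, zero_sub,
      neg_add_cancel]

lemma sum_u_succ (r : ℕ) (ω : Ω) :
    ∑ i, S.u (r+1) i ω = P.β • ∑ i, S.u r i ω + ∑ i, S.G r i ω := by
  simp only [S.hu, Finset.sum_add_distrib, Finset.smul_sum]

lemma ubar_succ (r : ℕ) (ω : Ω) :
    S.ubar (r+1) ω = P.β • S.ubar r ω + (N:ℝ)⁻¹ • ∑ i, S.G r i ω := by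
  simp only [ubar, sum_u_succ, smul_add, smul_comm ((N:ℝ)⁻¹) P.β]

lemma ubar_zero (ω : Ω) : S.ubar 0 ω = 0 := by
  simp [ubar, sum_u0]

lemma xbar_succ (r : ℕ) (ω : Ω) :
    S.xbar (r+1) ω = S.xbar r ω - S.η • S.ubar (r+1) ω := by
  have h1 : ∑ i, S.x (r+1) i ω
      = ∑ i, S.x r i ω - S.η • (∑ i, S.u (r+1) i ω - ∑ i, S.c r i ω) := by
    simp only [S.hx, Finset.sum_sub_distrib]
    congr 1
    · rw [Finset.sum_comm]
      refine Finset.sum_congr rfl fun j _ => ?_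
      rw [← Finset.sum_smul, P.hWcol j, one_smul]
    · rw [← Finset.smul_sum, Finset.sum_sub_distrib]
  simp only [xbar, ubar, h1, sum_c_eq_zero, sub_zero, smul_sub, smul_comm ((N:ℝ)⁻¹) S.η]

lemma ubar_succ_decomp (r : ℕ) (ω : Ω) :
    S.ubar (r+1) ω = S.svec r ω + S.nbar r ω := by
  have hgF : P.gradF (S.xbar r ω) = (N:ℝ)⁻¹ • ∑ i, P.g i (S.xbar r ω) := rfl
  rw [ubar_succ]
  simp only [svec, nbar, mvec, noise, Finset.sum_sub_distrib, smul_sub, hgF]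
  abel

lemma Δv_zero (i : Fin N) (ω : Ω) : S.Δv 0 i ω = 0 := by
  have hb : (1 - P.β) ≠ 0 := by
    have := P.hβ1; intro h; nlinarith
  simp only [Δv, dseq, eseq, smul_zero, zero_add, sub_zero, add_zero]
  rw [smul_smul]
  have : P.β * (1 - P.β)⁻¹ = (1 - P.β)⁻¹ * P.β := by ring
  match_scalars <;> field_simp
  all_goals ring

lemma Δv_succ (r : ℕ) (i : Fin N) (ω : Ω) :
    S.Δv (r+1) i ω = P.β • S.Δv r i ω + S.hvec r i ω := by
  show S.dseq (r+2) i ω - S.dseq (r+1) i ω - S.eseq (r+2) i ω + S.eseq (r+1) i ω = _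
  simp only [Δv, hvec]
  rw [show S.dseq (r+2) = fun i ω => P.β • S.dseq (r+1) i ω + P.g i (S.xbar (r+1) ω) from rfl,
    show S.eseq (r+2) = fun i ω => P.β • S.eseq (r+1) i ω + P.gradF (S.xbar (r+1) ω) from rfl]
  cases r with
  | zero =>
    simp only [dseq, eseq]
    module
  | succ r =>
    rw [show S.dseq (r+2) = fun i ω => P.β • S.dseq (r+1) i ω + P.g i (S.xbar (r+1) ω) from rfl,
      show S.eseq (r+2) = fun i ω => P.β • S.eseq (r+1) i ω + P.gradF (S.xbar (r+1) ω) from rfl]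
    module

lemma gradF_lip (v w : EuclideanSpace ℝ (Fin d)) :
    ‖P.gradF v - P.gradF w‖ ≤ P.L * ‖v - w‖ := by
  have hN := hNpos P
  rw [MTProblem.gradF, MTProblem.gradF, ← smul_sub, ← Finset.sum_sub_distrib, norm_smul]
  calc ‖(N:ℝ)⁻¹‖ * ‖∑ i, (P.g i v - P.g i w)‖
      ≤ (N:ℝ)⁻¹ * ∑ i, ‖P.g i v - P.g i w‖ := by
        rw [Real.norm_eq_abs, abs_of_nonneg (by positivity)]
        exact mul_le_mul_of_nonneg_left (norm_sum_le _ _) (by positivity)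
    _ ≤ (N:ℝ)⁻¹ * ∑ _i : Fin N, P.L * ‖v - w‖ := by
        refine mul_le_mul_of_nonneg_left (Finset.sum_le_sum fun i _ => P.hsmooth i v w)
          (by positivity)
    _ = P.L * ‖v - w‖ := by
        rw [Finset.sum_const, Finset.card_univ, Fintype.card_fin, nsmul_eq_mul]
        field_simp

lemma hvec_norm_le (r : ℕ) (i : Fin N) (ω : Ω) :
    ‖S.hvec r i ω‖ ≤ 2 * P.L * (S.η * ‖S.ubar (r+1) ω‖) := by
  have hd : S.xbar (r+1) ω - S.xbar r ω = -(S.η • S.ubar (r+1) ω) := by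
    rw [xbar_succ]; abel
  have hdn : ‖S.xbar (r+1) ω - S.xbar r ω‖ = S.η * ‖S.ubar (r+1) ω‖ := by
    rw [hd, norm_neg, norm_smul, Real.norm_eq_abs, abs_of_pos S.hη]
  have h1 : ‖P.g i (S.xbar (r+1) ω) - P.g i (S.xbar r ω)‖ ≤ P.L * (S.η * ‖S.ubar (r+1) ω‖) := by
    rw [← hdn]; exact P.hsmooth i _ _
  have h2 : ‖P.gradF (S.xbar (r+1) ω) - P.gradF (S.xbar r ω)‖
      ≤ P.L * (S.η * ‖S.ubar (r+1) ω‖) := by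
    rw [← hdn]; exact gradF_lip _ _
  have : S.hvec r i ω = (P.g i (S.xbar (r+1) ω) - P.g i (S.xbar r ω))
      - (P.gradF (S.xbar (r+1) ω) - P.gradF (S.xbar r ω)) := by
    rw [hvec]; abel
  rw [this]
  calc ‖_ - _‖ ≤ _ := norm_sub_le _ _
    _ ≤ 2 * P.L * (S.η * ‖S.ubar (r+1) ω‖) := by linarith

end MTRun

namespace MTRun

variable {N d : ℕ} {Ω : Type} [mΩ : MeasurableSpace Ω] {P : MTProblem N d Ω} (S : MTRun P)

lemma key_scalar {β L η x y u : ℝ} (hβ0 : 0 ≤ β) (hβ1 : β < 1) (hx : 0 ≤ x)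
    (hu : 0 ≤ u) (hL : 0 ≤ L) (hη : 0 ≤ η) (hy0 : 0 ≤ y) (hy : y ≤ 2*L*(η*u)) :
    (β*x + y)^2 ≤ 2*β^2/(1+β^2)*x^2 + 8*L^2*η^2/(1-β^2)*u^2 := by
  have h1 : (0:ℝ) < 1 + β^2 := by positivity
  have h2 : (0:ℝ) < 1 - β^2 := by nlinarith
  set z : ℝ := 2*L*(η*u) with hz
  have hz0 : 0 ≤ z := by positivity
  have step1 : (β*x + y)^2 ≤ (β*x + z)^2 := by
    have : 0 ≤ β*x := by positivity
    nlinarith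
  have step2 : (β*x + z)^2 ≤ 2*β^2/(1+β^2)*x^2 + 2/(1-β^2)*z^2 := by
    rw [div_mul_eq_mul_div, div_mul_eq_mul_div, div_add_div _ _ h1.ne' h2.ne',
      le_div_iff₀ (mul_pos h1 h2)]
    nlinarith [sq_nonneg ((1-β^2)*(β*x) -(1+β^2)*z)]
  have step3 : 2/(1-β^2)*z^2 = 8*L^2*η^2/(1-β^2)*u^2 := by
    rw [hz]; field_simp; ring
  linarith [step1, step2, step3.le.trans_eq rfl, step3 ▸ step2]

lemma Δv_ptwise (r : ℕ) (i : Fin N) (ω : Ω) :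
    ‖S.Δv (r+1) i ω‖^2 ≤ 2*P.β^2/(1+P.β^2) * ‖S.Δv r i ω‖^2
      + 8*P.L^2*S.η^2/(1-P.β^2) * ‖S.ubar (r+1) ω‖^2 := by
  have h1 : ‖S.Δv (r+1) i ω‖ ≤ P.β * ‖S.Δv r i ω‖ + ‖S.hvec r i ω‖ := by
    rw [Δv_succ]
    refine (norm_add_le _ _).trans ?_
    rw [norm_smul, Real.norm_eq_abs, abs_of_nonneg P.hβ0]
  have h2 := S.hvec_norm_le r i ω
  have h3 := key_scalar P.hβ0 P.hβ1 (norm_nonneg (S.Δv r i ω)) (norm_nonneg (S.ubar (r+1) ω))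
    P.hL.le S.hη.le (norm_nonneg (S.hvec r i ω)) h2
  calc ‖S.Δv (r+1) i ω‖^2 ≤ (P.β * ‖S.Δv r i ω‖ + ‖S.hvec r i ω‖)^2 := by
        have h0 : 0 ≤ P.β * ‖S.Δv r i ω‖ + ‖S.hvec r i ω‖ :=
          add_nonneg (mul_nonneg P.hβ0 (norm_nonneg _)) (norm_nonneg _)
        nlinarith [norm_nonneg (S.Δv (r+1) i ω)]
    _ ≤ _ := h3

lemma Δv_sum_ptwise (r : ℕ) (ω : Ω) :
    ∑ i, ‖S.Δv (r+1) i ω‖^2 ≤ 2*P.β^2/(1+P.β^2) * ∑ i, ‖S.Δv r i ω‖^2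
      + (N:ℝ) * (8*P.L^2*S.η^2/(1-P.β^2) * ‖S.ubar (r+1) ω‖^2) := by
  calc ∑ i, ‖S.Δv (r+1) i ω‖^2
      ≤ ∑ i, (2*P.β^2/(1+P.β^2) * ‖S.Δv r i ω‖^2
          + 8*P.L^2*S.η^2/(1-P.β^2) * ‖S.ubar (r+1) ω‖^2) :=
        Finset.sum_le_sum fun i _ => S.Δv_ptwise r i ω
    _ = _ := by
        rw [Finset.sum_add_distrib, ← Finset.mul_sum, Finset.sum_const, Finset.card_univ,
          Fintype.card_fin, nsmul_eq_mul]

lemma mvec_sq_le (r : ℕ) (ω : Ω) :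
    ‖S.mvec r ω‖^2 ≤ P.L^2 * ((N:ℝ)⁻¹ * ∑ i, ‖S.x r i ω - S.xbar r ω‖^2) := by
  have hN := hNpos P
  have h1 : ‖S.mvec r ω‖ ≤ (N:ℝ)⁻¹ * ∑ i, (P.L * ‖S.x r i ω - S.xbar r ω‖) := by
    rw [mvec, norm_smul, Real.norm_eq_abs, abs_of_nonneg (by positivity)]
    refine mul_le_mul_of_nonneg_left ((norm_sum_le _ _).trans ?_) (by positivity)

    exact Finset.sum_le_sum fun i _ => P.hsmooth i _ _
  have h2 : ((N:ℝ)⁻¹ * ∑ i, (P.L * ‖S.x r i ω - S.xbar r ω‖))^2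
      ≤ (N:ℝ)⁻¹ * ∑ i, (P.L * ‖S.x r i ω - S.xbar r ω‖)^2 := by
    have hcs := sq_sum_le_card_mul_sum_sq
      (s := (Finset.univ : Finset (Fin N))) (f := fun i => P.L * ‖S.x r i ω - S.xbar r ω‖)
    rw [Finset.card_univ, Fintype.card_fin] at hcs
    rw [mul_pow]
    have : ((N:ℝ)⁻¹)^2 * (∑ i, P.L * ‖S.x r i ω - S.xbar r ω‖)^2
        ≤ ((N:ℝ)⁻¹)^2 * ((N:ℝ) * ∑ i, (P.L * ‖S.x r i ω - S.xbar r ω‖)^2) := by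
      exact mul_le_mul_of_nonneg_left (by exact_mod_cast hcs) (by positivity)
    calc ((N:ℝ)⁻¹)^2 * (∑ i, P.L * ‖S.x r i ω - S.xbar r ω‖)^2
        ≤ ((N:ℝ)⁻¹)^2 * ((N:ℝ) * ∑ i, (P.L * ‖S.x r i ω - S.xbar r ω‖)^2) := this
      _ = (N:ℝ)⁻¹ * ∑ i, (P.L * ‖S.x r i ω - S.xbar r ω‖)^2 := by
          field_simp
  have h3 : ‖S.mvec r ω‖^2 ≤ ((N:ℝ)⁻¹ * ∑ i, (P.L * ‖S.x r i ω - S.xbar r ω‖))^2 := by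
    have h0 : 0 ≤ (N:ℝ)⁻¹ * ∑ i, (P.L * ‖S.x r i ω - S.xbar r ω‖) :=
      mul_nonneg (by positivity) (Finset.sum_nonneg fun i _ =>
        mul_nonneg P.hL.le (norm_nonneg _))
    nlinarith [norm_nonneg (S.mvec r ω)]
  refine h3.trans (h2.trans ?_)
  rw [Finset.mul_sum, Finset.mul_sum, Finset.mul_sum]
  exact Finset.sum_le_sum fun i _ => by rw [mul_pow]; ring_nf; exact le_refl _

lemma svec_sq_le (r : ℕ) (ω : Ω) :
    ‖S.svec r ω‖^2 ≤ 2*P.β^2*‖S.ubar r ω‖^2 + 4*‖P.gradF (S.xbar r ω)‖^2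
      + 4*P.L^2*((N:ℝ)⁻¹ * ∑ i, ‖S.x r i ω - S.xbar r ω‖^2) := by
  set a := ‖S.ubar r ω‖
  set b := ‖P.gradF (S.xbar r ω)‖
  set c := ‖S.mvec r ω‖
  have h1 : ‖S.svec r ω‖ ≤ P.β * a + b + c := by
    rw [svec]
    refine (norm_add_le _ _).trans ?_
    have := (norm_add_le (P.β • S.ubar r ω) (P.gradF (S.xbar r ω)))
    rw [norm_smul, Real.norm_eq_abs, abs_of_nonneg P.hβ0] at this
    linarith
  have h2 : ‖S.svec r ω‖^2 ≤ (P.β * a + b + c)^2 := by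
    have : 0 ≤ P.β * a + b + c :=
      add_nonneg (add_nonneg (mul_nonneg P.hβ0 (norm_nonneg _)) (norm_nonneg _)) (norm_nonneg _)
    nlinarith [norm_nonneg (S.svec r ω)]
  have h3 : (P.β * a + b + c)^2 ≤ 2*(P.β*a)^2 + 4*b^2 + 4*c^2 := by
    nlinarith [sq_nonneg (P.β*a - b - c), sq_nonneg (b - c)]
  have h4 := S.mvec_sq_le r ω
  have hβa : (P.β*a)^2 = P.β^2*a^2 := by ring
  nlinarith

end MTRun

namespace MTRun

variable {N d : ℕ} {Ω : Type} [mΩ : MeasurableSpace Ω] {P : MTProblem N d Ω} (S : MTRun P)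

lemma g_lip (P : MTProblem N d Ω) (i : Fin N) :
    LipschitzWith (Real.toNNReal P.L) (P.g i) := by
  refine LipschitzWith.of_dist_le_mul fun a b => ?_
  rw [dist_eq_norm, dist_eq_norm, Real.coe_toNNReal _ P.hL.le]
  exact P.hsmooth i a b

lemma g_cont (P : MTProblem N d Ω) (i : Fin N) : Continuous (P.g i) :=
  (g_lip P i).continuous

lemma gradF_cont (P : MTProblem N d Ω) : Continuous (P.gradF) := by
  have : Continuous fun v => ∑ i, P.g i v :=
    continuous_finset_sum _ fun i _ => g_cont P i
  exact this.const_smul ((N:ℝ)⁻¹)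

lemma memℒp_g_comp {v : Ω → EuclideanSpace ℝ (Fin d)} (hv : MemLp v 2 P.μ) (i : Fin N) :
    MemLp (fun ω => P.g i (v ω)) 2 P.μ := by
  haveI := P.prob
  have hlip : LipschitzWith (Real.toNNReal P.L) (fun w => P.g i w - P.g i 0) := by
    refine LipschitzWith.of_dist_le_mul fun a b => ?_
    rw [dist_eq_norm, Real.coe_toNNReal _ P.hL.le]
    have he : (P.g i a - P.g i 0) - (P.g i b - P.g i 0) = P.g i a - P.g i b := by abel
    rw [he, ← dist_eq_norm, dist_eq_norm]
    exact P.hsmooth i a b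
  have h0 : (fun w => P.g i w - P.g i 0) 0 = 0 := by simp
  have h1 : MemLp ((fun w => P.g i w - P.g i 0) ∘ v) 2 P.μ := hlip.comp_memLp h0 hv
  have h2 := h1.add (memLp_const (P.g i 0))
  have he : (fun ω => P.g i (v ω))
      = ((fun w => P.g i w - P.g i 0) ∘ v) + fun _ => P.g i 0 := by
    funext ω; simp [Function.comp]
  rw [he]; exact h2

lemma memℒp_xuc : ∀ r : ℕ, (∀ i, MemLp (S.x r i) 2 P.μ) ∧ (∀ i, MemLp (S.u r i) 2 P.μ)
    ∧ (∀ i, MemLp (S.c r i) 2 P.μ) := by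
  haveI := P.prob
  intro r
  induction r with
  | zero =>
    have hu : ∀ i, MemLp (S.u 0 i) 2 P.μ := by
      intro i
      have he : S.u 0 i = fun ω => (1-P.β)⁻¹ • (S.G 0 i ω - (N:ℝ)⁻¹ • ∑ j, S.G 0 j ω) :=
        funext (S.hu0 i)
      rw [he]
      exact (((S.hmeas 0 i).sub
        ((memLp_finset_sum Finset.univ fun j _ => S.hmeas 0 j).const_smul
          ((N:ℝ)⁻¹))).const_smul ((1-P.β)⁻¹))
    refine ⟨fun i => ?_, hu, fun i => ?_⟩
    · rw [S.hx0]; exact memLp_const _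
    · rw [S.hc0]; exact hu i
  | succ r ih =>
    obtain ⟨hx, hu, hc⟩ := ih
    have hu' : ∀ i, MemLp (S.u (r+1) i) 2 P.μ := by
      intro i
      have he : S.u (r+1) i = fun ω => P.β • S.u r i ω + S.G r i ω := funext (S.hu r i)
      rw [he]; exact ((hu i).const_smul P.β).add (S.hmeas r i)
    refine ⟨fun i => ?_, hu', fun i => ?_⟩
    · have he : S.x (r+1) i
          = fun ω => (∑ j, P.W i j • S.x r j ω) - S.η • (S.u (r+1) i ω - S.c r i ω) :=
        funext (S.hx r i)
      rw [he]
      exact (memLp_finset_sum Finset.univ fun j _ => (hx j).const_smul (P.W i j)).sub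
        (((hu' i).sub (hc i)).const_smul S.η)
    · have he : S.c (r+1) i
          = fun ω => (∑ j, P.W i j • (S.c r j ω - S.u (r+1) j ω)) + S.u (r+1) i ω :=
        funext (S.hc r i)
      rw [he]
      exact (memLp_finset_sum Finset.univ fun j _ =>
        ((hc j).sub (hu' j)).const_smul (P.W i j)).add (hu' i)

lemma memℒp_x (r : ℕ) (i : Fin N) : MemLp (S.x r i) 2 P.μ := (S.memℒp_xuc r).1 i

lemma memℒp_xbar (r : ℕ) : MemLp (S.xbar r) 2 P.μ :=
  (memLp_finset_sum Finset.univ fun i _ => S.memℒp_x r i).const_smul ((N:ℝ)⁻¹)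

lemma memℒp_ubar (r : ℕ) : MemLp (S.ubar r) 2 P.μ :=
  (memLp_finset_sum Finset.univ fun i _ => (S.memℒp_xuc r).2.1 i).const_smul ((N:ℝ)⁻¹)

lemma memℒp_gradF_xbar (r : ℕ) : MemLp (fun ω => P.gradF (S.xbar r ω)) 2 P.μ := by
  have : MemLp (fun ω => ∑ i, P.g i (S.xbar r ω)) 2 P.μ :=
    memLp_finset_sum Finset.univ fun i _ => memℒp_g_comp (S.memℒp_xbar r) i
  exact this.const_smul ((N:ℝ)⁻¹)

lemma memℒp_noise (r : ℕ) (i : Fin N) : MemLp (S.noise r i) 2 P.μ :=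
  (S.hmeas r i).sub (memℒp_g_comp (S.memℒp_x r i) i)

lemma memℒp_nbar (r : ℕ) : MemLp (S.nbar r) 2 P.μ :=
  (memLp_finset_sum Finset.univ fun i _ => S.memℒp_noise r i).const_smul ((N:ℝ)⁻¹)

lemma memℒp_mvec (r : ℕ) : MemLp (S.mvec r) 2 P.μ :=
  (memLp_finset_sum Finset.univ fun i _ =>
    (memℒp_g_comp (S.memℒp_x r i) i).sub (memℒp_g_comp (S.memℒp_xbar r) i)).const_smul ((N:ℝ)⁻¹)

lemma memℒp_svec (r : ℕ) : MemLp (S.svec r) 2 P.μ :=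
  (((S.memℒp_ubar r).const_smul P.β).add (S.memℒp_gradF_xbar r)).add (S.memℒp_mvec r)

lemma memℒp_dseq (r : ℕ) (i : Fin N) : MemLp (S.dseq r i) 2 P.μ := by
  induction r with
  | zero =>
    exact ((memℒp_g_comp (S.memℒp_xbar 0) i).sub (S.memℒp_gradF_xbar 0)).const_smul ((1 - P.β)⁻¹)
  | succ r ih =>
    exact (ih.const_smul P.β).add (memℒp_g_comp (S.memℒp_xbar r) i)

lemma memℒp_eseq (r : ℕ) (i : Fin N) : MemLp (S.eseq r i) 2 P.μ := by
  haveI := P.prob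
  induction r with
  | zero => exact memLp_const 0
  | succ r ih => exact (ih.const_smul P.β).add (S.memℒp_gradF_xbar r)

lemma memℒp_Δv (r : ℕ) (i : Fin N) : MemLp (S.Δv r i) 2 P.μ :=
  (((S.memℒp_dseq (r+1) i).sub (S.memℒp_dseq r i)).sub (S.memℒp_eseq (r+1) i)).add
    (S.memℒp_eseq r i)

lemma integrable_inner' {E : Type*} [NormedAddCommGroup E] [InnerProductSpace ℝ E]
    {f g : Ω → E} {μ : Measure Ω} (hf : MemLp f 2 μ) (hg : MemLp g 2 μ) :
    Integrable (fun ω => (inner ℝ (f ω) (g ω) : ℝ)) μ := by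
  have h := L2.integrable_inner (𝕜 := ℝ) (hf.toLp f) (hg.toLp g)
  refine h.congr ?_
  filter_upwards [hf.coeFn_toLp, hg.coeFn_toLp] with ω h1 h2
  rw [h1, h2]

lemma integrable_normsq {E : Type*} [NormedAddCommGroup E] [InnerProductSpace ℝ E]
    {f : Ω → E} {μ : Measure Ω} (hf : MemLp f 2 μ) :
    Integrable (fun ω => ‖f ω‖^2) μ := by
  have h := integrable_inner' hf hf
  refine h.congr (Filter.Eventually.of_forall fun ω => ?_)
  exact real_inner_self_eq_norm_sq (f ω)

end MTRun

namespace MTRun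

variable {N d : ℕ} {Ω : Type} [mΩ : MeasurableSpace Ω] {P : MTProblem N d Ω} (S : MTRun P)

lemma sm_xbar (r : ℕ) : StronglyMeasurable[S.ℱ r] (S.xbar r) := by
  refine StronglyMeasurable.const_smul ?_ ((N:ℝ)⁻¹)
  exact Finset.stronglyMeasurable_fun_sum Finset.univ fun i _ => S.hadapted_x r i

lemma sm_ubar (r : ℕ) : StronglyMeasurable[S.ℱ r] (S.ubar r) := by
  induction r with
  | zero =>
    have he : S.ubar 0 = fun _ => 0 := funext (S.ubar_zero)
    rw [he]; exact stronglyMeasurable_const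
  | succ r ih =>
    have he : S.ubar (r+1) = fun ω => P.β • S.ubar r ω + (N:ℝ)⁻¹ • ∑ i, S.G r i ω :=
      funext (S.ubar_succ r)
    rw [he]
    refine StronglyMeasurable.add ?_ ?_
    · exact (ih.mono (S.ℱ.mono (Nat.le_succ r))).const_smul P.β
    · exact (Finset.stronglyMeasurable_fun_sum Finset.univ fun i _ =>
        S.hadapted_G r i).const_smul ((N:ℝ)⁻¹)

lemma sm_svec (r : ℕ) : StronglyMeasurable[S.ℱ r] (S.svec r) := by
  refine StronglyMeasurable.add (StronglyMeasurable.add ?_ ?_) ?_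
  · exact (S.sm_ubar r).const_smul P.β
  · exact (gradF_cont P).comp_stronglyMeasurable (S.sm_xbar r)
  · refine StronglyMeasurable.const_smul ?_ ((N:ℝ)⁻¹)
    refine Finset.stronglyMeasurable_fun_sum Finset.univ fun i _ => ?_
    exact ((g_cont P i).comp_stronglyMeasurable (S.hadapted_x r i)).sub
      ((g_cont P i).comp_stronglyMeasurable (S.sm_xbar r))

/-- Conditional expectation commutes with continuous linear maps. -/
lemma condexp_clm {Ω' : Type*} {F G : Type*} [NormedAddCommGroup F] [NormedSpace ℝ F]
    [CompleteSpace F] [NormedAddCommGroup G] [NormedSpace ℝ G] [CompleteSpace G]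
    {m m0 : MeasurableSpace Ω'} {μ : Measure Ω'} [IsFiniteMeasure μ] (hm : m ≤ m0)
    {f : Ω' → F} (hf : Integrable f μ) (T : F →L[ℝ] G) :
    μ[fun ω => T (f ω)|m] =ᵐ[μ] fun ω => T ((μ[f|m]) ω) := by
  haveI : SigmaFinite (μ.trim hm) := by infer_instance
  refine (ae_eq_condExp_of_forall_setIntegral_eq hm (T.integrable_comp hf)
    (fun s _ _ => (T.integrable_comp integrable_condExp).integrableOn)
    (fun s hs hμs => ?_) ?_).symm
  · rw [T.integral_comp_comm integrable_condExp.integrableOn,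
      setIntegral_condExp hm hf hs, T.integral_comp_comm hf.integrableOn]
  · exact (T.continuous.comp_stronglyMeasurable stronglyMeasurable_condExp).aestronglyMeasurable

lemma condexp_noise (r : ℕ) (i : Fin N) :
    P.μ[S.noise r i|S.ℱ r] =ᵐ[P.μ] 0 := by
  haveI := P.prob
  have hGint : Integrable (S.G r i) P.μ := (S.hmeas r i).integrable (by norm_num)
  have hgint : Integrable (fun ω => P.g i (S.x r i ω)) P.μ :=
    (memℒp_g_comp (S.memℒp_x r i) i).integrable (by norm_num)
  have h1 : P.μ[S.noise r i|S.ℱ r]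
      =ᵐ[P.μ] P.μ[S.G r i|S.ℱ r] - P.μ[fun ω => P.g i (S.x r i ω)|S.ℱ r] := by
    have he : S.noise r i = S.G r i - fun ω => P.g i (S.x r i ω) := rfl
    rw [he]
    exact condExp_sub hGint hgint _
  have h2 : P.μ[fun ω => P.g i (S.x r i ω)|S.ℱ r] = fun ω => P.g i (S.x r i ω) :=
    condExp_of_stronglyMeasurable (S.ℱ.le r)
      ((g_cont P i).comp_stronglyMeasurable (S.hadapted_x r i)) hgint
  filter_upwards [h1, S.hunbiased r i] with ω hω hub
  rw [hω, Pi.sub_apply, h2, hub, Pi.zero_apply, sub_self]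

lemma integral_inner_svec_noise (r : ℕ) (i : Fin N) :
    ∫ ω, (inner ℝ (S.svec r ω) (S.noise r i ω) : ℝ) ∂P.μ = 0 := by
  haveI := P.prob
  have hsm : MemLp (S.svec r) 2 P.μ := S.memℒp_svec r
  have hnm : MemLp (S.noise r i) 2 P.μ := S.memℒp_noise r i
  have hinner : ∀ ω, (inner ℝ (S.svec r ω) (S.noise r i ω) : ℝ)
      = ∑ k, (S.svec r ω k) * (S.noise r i ω k) := by
    intro ω
    rw [PiLp.inner_apply]
    refine Finset.sum_congr rfl fun k _ => ?_
    simp [RCLike.inner_apply, conj_trivial, mul_comm]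
  have hintk : ∀ k : Fin d, Integrable (fun ω => (S.svec r ω k) * (S.noise r i ω k)) P.μ := by
    intro k
    have h1 : MemLp (fun ω => S.svec r ω k) 2 P.μ := by
      have := ((EuclideanSpace.proj k : EuclideanSpace ℝ (Fin d) →L[ℝ] ℝ)).comp_memLp' hsm
      exact this
    have h2 : MemLp (fun ω => S.noise r i ω k) 2 P.μ := by
      have := ((EuclideanSpace.proj k : EuclideanSpace ℝ (Fin d) →L[ℝ] ℝ)).comp_memLp' hnm
      exact this
    have := integrable_inner' (E := ℝ) h1 h2
    simpa [RCLike.inner_apply, conj_trivial, mul_comm] using this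
  have hzero : ∀ k : Fin d, ∫ ω, (S.svec r ω k) * (S.noise r i ω k) ∂P.μ = 0 := by
    intro k
    have hnint : Integrable (S.noise r i) P.μ := hnm.integrable (by norm_num)
    have hnk : P.μ[fun ω => S.noise r i ω k|S.ℱ r] =ᵐ[P.μ] 0 := by
      have hcomm := condexp_clm (μ := P.μ) (S.ℱ.le r) hnint
        ((EuclideanSpace.proj k : EuclideanSpace ℝ (Fin d) →L[ℝ] ℝ))
      have := S.condexp_noise r i
      filter_upwards [hcomm, this] with ω h1 h2
      have : (P.μ[S.noise r i|S.ℱ r]) ω = 0 := h2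
      simp only [PiLp.proj_apply] at h1
      rw [h1, this]
      simp
    have hsk : StronglyMeasurable[S.ℱ r] (fun ω => S.svec r ω k) := by
      have := ((EuclideanSpace.proj k : EuclideanSpace ℝ (Fin d) →L[ℝ] ℝ)).continuous.comp_stronglyMeasurable
        (S.sm_svec r)
      simpa [Function.comp, PiLp.proj_apply] using this
    have h2' : MemLp (fun ω => S.noise r i ω k) 2 P.μ := by
      have := ((EuclideanSpace.proj k : EuclideanSpace ℝ (Fin d) →L[ℝ] ℝ)).comp_memLp' hnm
      exact this
    have hnk_int : Integrable (fun ω => S.noise r i ω k) P.μ :=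
      h2'.integrable (by norm_num)
    have hpull := condExp_mul_of_stronglyMeasurable_left (μ := P.μ) (m := S.ℱ r) hsk
      (hintk k) hnk_int
    have h3 : P.μ[(fun ω => S.svec r ω k) * (fun ω => S.noise r i ω k)|S.ℱ r]
        =ᵐ[P.μ] 0 := by
      filter_upwards [hpull, hnk] with ω h1 h2
      rw [h1, Pi.mul_apply, h2, Pi.zero_apply, mul_zero]
    have h4 : ∫ ω, (S.svec r ω k) * (S.noise r i ω k) ∂P.μ
        = ∫ ω, (P.μ[(fun ω => S.svec r ω k) * (fun ω => S.noise r i ω k)|S.ℱ r]) ω ∂P.μ :=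
      (integral_condExp (S.ℱ.le r)).symm
    rw [h4, integral_congr_ae h3]
    simp
  calc ∫ ω, (inner ℝ (S.svec r ω) (S.noise r i ω) : ℝ) ∂P.μ
      = ∫ ω, ∑ k, (S.svec r ω k) * (S.noise r i ω k) ∂P.μ := by
        refine integral_congr_ae (Filter.Eventually.of_forall fun ω => hinner ω)
    _ = ∑ k, ∫ ω, (S.svec r ω k) * (S.noise r i ω k) ∂P.μ :=
        integral_finset_sum _ fun k _ => hintk k
    _ = 0 := by simp [hzero]

end MTRun

namespace MTRun

variable {N d : ℕ} {Ω : Type} [mΩ : MeasurableSpace Ω] {P : MTProblem N d Ω} (S : MTRun P)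

lemma integral_nbar_sq_le (r : ℕ) :
    ∫ ω, ‖S.nbar r ω‖^2 ∂P.μ ≤ P.σ^2 / (N:ℝ) := by
  haveI := P.prob
  have hN := hNpos P
  have hexp : ∀ ω, ‖S.nbar r ω‖^2
      = ((N:ℝ)⁻¹)^2 * ∑ i, ∑ j, (inner ℝ (S.noise r i ω) (S.noise r j ω) : ℝ) := by
    intro ω
    rw [nbar, norm_smul, mul_pow, Real.norm_eq_abs, sq_abs]
    congr 1
    rw [← real_inner_self_eq_norm_sq, sum_inner]
    exact Finset.sum_congr rfl fun i _ => inner_sum _ _ _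
  have hint : ∀ i j : Fin N, Integrable
      (fun ω => (inner ℝ (S.noise r i ω) (S.noise r j ω) : ℝ)) P.μ :=
    fun i j => integrable_inner' (S.memℒp_noise r i) (S.memℒp_noise r j)
  have h1 : ∫ ω, ‖S.nbar r ω‖^2 ∂P.μ
      = ((N:ℝ)⁻¹)^2 * ∑ i, ∑ j, ∫ ω, (inner ℝ (S.noise r i ω) (S.noise r j ω) : ℝ) ∂P.μ := by
    calc ∫ ω, ‖S.nbar r ω‖^2 ∂P.μ
        = ∫ ω, ((N:ℝ)⁻¹)^2
            * ∑ i, ∑ j, (inner ℝ (S.noise r i ω) (S.noise r j ω) : ℝ) ∂P.μ :=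
          integral_congr_ae (Filter.Eventually.of_forall hexp)
      _ = ((N:ℝ)⁻¹)^2
            * ∫ ω, ∑ i, ∑ j, (inner ℝ (S.noise r i ω) (S.noise r j ω) : ℝ) ∂P.μ :=
          integral_const_mul _ _
      _ = ((N:ℝ)⁻¹)^2 * ∑ i, ∑ j, ∫ ω, (inner ℝ (S.noise r i ω) (S.noise r j ω) : ℝ) ∂P.μ := by
          rw [integral_finset_sum _ fun i _ => integrable_finset_sum _ fun j _ => hint i j]
          congr 1
          exact Finset.sum_congr rfl fun i _ =>
            integral_finset_sum _ fun j _ => hint i j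
  have h2 : ∀ i : Fin N, ∑ j, ∫ ω, (inner ℝ (S.noise r i ω) (S.noise r j ω) : ℝ) ∂P.μ
      = ∫ ω, ‖S.noise r i ω‖^2 ∂P.μ := by
    intro i
    rw [Finset.sum_eq_single i]
    · refine integral_congr_ae (Filter.Eventually.of_forall fun ω => ?_)
      exact real_inner_self_eq_norm_sq _
    · intro j _ hj
      exact S.horth r r i j (by simp [hj.symm])
    · intro h; exact absurd (Finset.mem_univ i) h
  have h3 : ∀ i : Fin N, ∫ ω, ‖S.noise r i ω‖^2 ∂P.μ ≤ P.σ^2 := fun i => S.hvar r i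
  calc ∫ ω, ‖S.nbar r ω‖^2 ∂P.μ
      = ((N:ℝ)⁻¹)^2 * ∑ i, ∫ ω, ‖S.noise r i ω‖^2 ∂P.μ := by
        rw [h1]; congr 1; exact Finset.sum_congr rfl fun i _ => h2 i
    _ ≤ ((N:ℝ)⁻¹)^2 * ∑ _i : Fin N, P.σ^2 := by
        refine mul_le_mul_of_nonneg_left (Finset.sum_le_sum fun i _ => h3 i) (by positivity)
    _ = P.σ^2 / (N:ℝ) := by
        rw [Finset.sum_const, Finset.card_univ, Fintype.card_fin, nsmul_eq_mul]
        field_simp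

lemma integral_inner_svec_nbar (r : ℕ) :
    ∫ ω, (inner ℝ (S.svec r ω) (S.nbar r ω) : ℝ) ∂P.μ = 0 := by
  have hexp : ∀ ω, (inner ℝ (S.svec r ω) (S.nbar r ω) : ℝ)
      = (N:ℝ)⁻¹ * ∑ i, (inner ℝ (S.svec r ω) (S.noise r i ω) : ℝ) := by
    intro ω
    rw [nbar, inner_smul_right, inner_sum]
  rw [integral_congr_ae (Filter.Eventually.of_forall hexp), integral_const_mul,
    integral_finset_sum _ fun i _ => integrable_inner' (S.memℒp_svec r) (S.memℒp_noise r i)]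
  rw [Finset.sum_congr rfl fun i _ => S.integral_inner_svec_noise r i]
  simp

lemma integrable_xdev_sum (r : ℕ) :
    Integrable (fun ω => ∑ i, ‖S.x r i ω - S.xbar r ω‖^2) P.μ :=
  integrable_finset_sum _ fun i _ => integrable_normsq ((S.memℒp_x r i).sub (S.memℒp_xbar r))

lemma integral_ubar_succ_sq (r : ℕ) :
    ∫ ω, ‖S.ubar (r+1) ω‖^2 ∂P.μ
      ≤ 2*P.β^2 * ∫ ω, ‖S.ubar r ω‖^2 ∂P.μ
        + 4 * ∫ ω, ‖P.gradF (S.xbar r ω)‖^2 ∂P.μ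
        + 4*P.L^2 * S.Xi r + P.σ^2 / (N:ℝ) := by
  haveI := P.prob
  have hsvec := S.memℒp_svec r
  have hnbar := S.memℒp_nbar r
  have hexp : ∫ ω, ‖S.ubar (r+1) ω‖^2 ∂P.μ
      = ∫ ω, ‖S.svec r ω‖^2 ∂P.μ + 2 * ∫ ω, (inner ℝ (S.svec r ω) (S.nbar r ω) : ℝ) ∂P.μ
        + ∫ ω, ‖S.nbar r ω‖^2 ∂P.μ := by
    have hpt : ∀ ω, ‖S.ubar (r+1) ω‖^2
        = ‖S.svec r ω‖^2 + 2 * (inner ℝ (S.svec r ω) (S.nbar r ω) : ℝ) + ‖S.nbar r ω‖^2 := by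
      intro ω
      rw [S.ubar_succ_decomp r ω]
      exact norm_add_sq_real _ _
    have hA : Integrable (fun ω => ‖S.svec r ω‖^2) P.μ := integrable_normsq hsvec
    have hB : Integrable (fun ω => 2 * (inner ℝ (S.svec r ω) (S.nbar r ω) : ℝ)) P.μ :=
      (integrable_inner' hsvec hnbar).const_mul 2
    have hC : Integrable (fun ω => ‖S.nbar r ω‖^2) P.μ := integrable_normsq hnbar
    have hAB : Integrable (fun ω => ‖S.svec r ω‖^2
        + 2 * (inner ℝ (S.svec r ω) (S.nbar r ω) : ℝ)) P.μ := hA.add hB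
    rw [integral_congr_ae (Filter.Eventually.of_forall hpt), integral_add hAB hC,
      integral_add hA hB, integral_const_mul]
  rw [hexp, S.integral_inner_svec_nbar r, mul_zero, add_zero]
  have hsvec_bound : ∫ ω, ‖S.svec r ω‖^2 ∂P.μ
      ≤ 2*P.β^2 * ∫ ω, ‖S.ubar r ω‖^2 ∂P.μ
        + 4 * ∫ ω, ‖P.gradF (S.xbar r ω)‖^2 ∂P.μ + 4*P.L^2 * S.Xi r := by
    have hmono : ∫ ω, ‖S.svec r ω‖^2 ∂P.μ
        ≤ ∫ ω, (2*P.β^2*‖S.ubar r ω‖^2 + 4*‖P.gradF (S.xbar r ω)‖^2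
            + 4*P.L^2*((N:ℝ)⁻¹ * ∑ i, ‖S.x r i ω - S.xbar r ω‖^2)) ∂P.μ := by
      refine integral_mono (integrable_normsq hsvec) ?_ (fun ω => S.svec_sq_le r ω)
      refine Integrable.add (Integrable.add ?_ ?_) ?_
      · exact (integrable_normsq (S.memℒp_ubar r)).const_mul _
      · exact (integrable_normsq (S.memℒp_gradF_xbar r)).const_mul _
      · have := (S.integrable_xdev_sum r).const_mul (4*P.L^2*(N:ℝ)⁻¹)
        refine this.congr (Filter.Eventually.of_forall fun ω => ?_)
        ring
    refine hmono.trans ?_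
    have hA : Integrable (fun ω => 2*P.β^2*‖S.ubar r ω‖^2) P.μ :=
      (integrable_normsq (S.memℒp_ubar r)).const_mul _
    have hB : Integrable (fun ω => 4*‖P.gradF (S.xbar r ω)‖^2) P.μ :=
      (integrable_normsq (S.memℒp_gradF_xbar r)).const_mul _
    have hC : Integrable (fun ω =>
        4*P.L^2*((N:ℝ)⁻¹ * ∑ i, ‖S.x r i ω - S.xbar r ω‖^2)) P.μ :=
      ((S.integrable_xdev_sum r).const_mul (4*P.L^2*(N:ℝ)⁻¹)).congr
        (Filter.Eventually.of_forall fun ω => by ring)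
    have hAB : Integrable (fun ω => 2*P.β^2*‖S.ubar r ω‖^2
        + 4*‖P.gradF (S.xbar r ω)‖^2) P.μ := hA.add hB
    rw [integral_add hAB hC, integral_add hA hB, integral_const_mul, integral_const_mul]
    have hXi : ∫ ω, 4*P.L^2*((N:ℝ)⁻¹ * ∑ i, ‖S.x r i ω - S.xbar r ω‖^2) ∂P.μ
        = 4*P.L^2 * S.Xi r := by
      have : ∀ ω, 4*P.L^2*((N:ℝ)⁻¹ * ∑ i, ‖S.x r i ω - S.xbar r ω‖^2)
          = (4*P.L^2*(N:ℝ)⁻¹) * ∑ i, ‖S.x r i ω - S.xbar r ω‖^2 := fun ω => by ring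
      rw [integral_congr_ae (Filter.Eventually.of_forall this), integral_const_mul]
      rw [Xi]
      ring
    rw [hXi]
  linarith [S.integral_nbar_sq_le r]

end MTRun

/-- **Lemma** (recursion for the momentum drift `𝒟`): for every round `r ≥ 0`,
`𝒟^{(r+1)} ≤ (2β²/(1+β²)) 𝒟^{(r)} + (32L⁴η²/(1−β²)) Ξ^{(r)} + (16L²β²η²/(1−β²)) E‖ū^{(r)}‖²
  + (32L²η²/(1−β²)) E‖∇f(x̄^{(r)})‖² + 8L²σ²η²/(N(1−β²))`. -/
theorem momentum_drift_recursion
    (N d : ℕ) (Ω : Type) [mΩ : MeasurableSpace Ω]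
    (P : MTProblem N d Ω) (S : MTRun P) :
    ∀ r : ℕ,
      S.DD (r + 1) ≤
        2 * P.β ^ 2 / (1 + P.β ^ 2) * S.DD r
          + 32 * P.L ^ 4 * S.η ^ 2 / (1 - P.β ^ 2) * S.Xi r
          + 16 * P.L ^ 2 * P.β ^ 2 * S.η ^ 2 / (1 - P.β ^ 2) * ∫ ω, ‖S.ubar r ω‖ ^ 2 ∂P.μ
          + 32 * P.L ^ 2 * S.η ^ 2 / (1 - P.β ^ 2) * ∫ ω, ‖P.gradF (S.xbar r ω)‖ ^ 2 ∂P.μ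
          + 8 * P.L ^ 2 * P.σ ^ 2 * S.η ^ 2 / ((N : ℝ) * (1 - P.β ^ 2)) := by
  intro r
  haveI := P.prob
  have hN : (0:ℝ) < (N:ℝ) := MTRun.hNpos P
  have hβ2 : (0:ℝ) < 1 - P.β^2 := by nlinarith [P.hβ0, P.hβ1]
  set A : ℝ := 2 * P.β ^ 2 / (1 + P.β ^ 2) with hAdef
  set K : ℝ := 8*P.L^2*S.η^2/(1-P.β^2) with hKdef
  have hA0 : 0 ≤ A := by
    have : (0:ℝ) < 1 + P.β^2 := by positivity
    positivity
  have hK0 : 0 ≤ K := by positivity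
  have hintD : ∀ s : ℕ, Integrable (fun ω => ∑ i, ‖S.Δv s i ω‖^2) P.μ :=
    fun s => integrable_finset_sum _ fun i _ => MTRun.integrable_normsq (S.memℒp_Δv s i)
  have hintU' : Integrable (fun ω => ‖S.ubar (r+1) ω‖^2) P.μ :=
    MTRun.integrable_normsq (S.memℒp_ubar (r+1))
  have hintU : Integrable (fun ω => (N:ℝ) * (K * ‖S.ubar (r+1) ω‖^2)) P.μ :=
    (hintU'.const_mul ((N:ℝ)*K)).congr (Filter.Eventually.of_forall fun ω => by ring)
  have hintAD : Integrable (fun ω => A * ∑ i, ‖S.Δv r i ω‖^2) P.μ :=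
    (hintD r).const_mul A
  have hmono : ∫ ω, (∑ i, ‖S.Δv (r+1) i ω‖^2) ∂P.μ
      ≤ ∫ ω, (A * ∑ i, ‖S.Δv r i ω‖^2 + (N:ℝ) * (K * ‖S.ubar (r+1) ω‖^2)) ∂P.μ :=
    integral_mono (hintD (r+1)) (hintAD.add hintU) (fun ω => S.Δv_sum_ptwise r ω)
  have hsplit : ∫ ω, (A * ∑ i, ‖S.Δv r i ω‖^2 + (N:ℝ) * (K * ‖S.ubar (r+1) ω‖^2)) ∂P.μ
      = A * ∫ ω, (∑ i, ‖S.Δv r i ω‖^2) ∂P.μ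
        + ((N:ℝ)*K) * ∫ ω, ‖S.ubar (r+1) ω‖^2 ∂P.μ := by
    rw [integral_add hintAD hintU, integral_const_mul]
    congr 1
    have : ∀ ω, (N:ℝ) * (K * ‖S.ubar (r+1) ω‖^2) = ((N:ℝ)*K) * ‖S.ubar (r+1) ω‖^2 :=
      fun ω => by ring
    rw [integral_congr_ae (Filter.Eventually.of_forall this), integral_const_mul]
  have hDD1 : S.DD (r+1) = (N:ℝ)⁻¹ * ∫ ω, (∑ i, ‖S.Δv (r+1) i ω‖^2) ∂P.μ := rfl
  have hDD0 : S.DD r = (N:ℝ)⁻¹ * ∫ ω, (∑ i, ‖S.Δv r i ω‖^2) ∂P.μ := rfl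
  have hstep : S.DD (r+1) ≤ A * S.DD r + K * ∫ ω, ‖S.ubar (r+1) ω‖^2 ∂P.μ := by
    rw [hDD1, hDD0]
    calc (N:ℝ)⁻¹ * ∫ ω, (∑ i, ‖S.Δv (r+1) i ω‖^2) ∂P.μ
        ≤ (N:ℝ)⁻¹ * (A * ∫ ω, (∑ i, ‖S.Δv r i ω‖^2) ∂P.μ
            + ((N:ℝ)*K) * ∫ ω, ‖S.ubar (r+1) ω‖^2 ∂P.μ) := by
          refine mul_le_mul_of_nonneg_left ?_ (by positivity)
          rw [← hsplit]; exact hmono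
      _ = A * ((N:ℝ)⁻¹ * ∫ ω, (∑ i, ‖S.Δv r i ω‖^2) ∂P.μ)
            + K * ∫ ω, ‖S.ubar (r+1) ω‖^2 ∂P.μ := by
          field_simp
  have hU := S.integral_ubar_succ_sq r
  calc S.DD (r+1) ≤ A * S.DD r + K * ∫ ω, ‖S.ubar (r+1) ω‖^2 ∂P.μ := hstep
    _ ≤ A * S.DD r + K * (2*P.β^2 * ∫ ω, ‖S.ubar r ω‖^2 ∂P.μ
          + 4 * ∫ ω, ‖P.gradF (S.xbar r ω)‖^2 ∂P.μ
          + 4*P.L^2 * S.Xi r + P.σ^2 / (N:ℝ)) := by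
        exact add_le_add le_rfl (mul_le_mul_of_nonneg_left hU hK0)
    _ = A * S.DD r
          + 32 * P.L ^ 4 * S.η ^ 2 / (1 - P.β ^ 2) * S.Xi r
          + 16 * P.L ^ 2 * P.β ^ 2 * S.η ^ 2 / (1 - P.β ^ 2) * ∫ ω, ‖S.ubar r ω‖ ^ 2 ∂P.μ
          + 32 * P.L ^ 2 * S.η ^ 2 / (1 - P.β ^ 2) * ∫ ω, ‖P.gradF (S.xbar r ω)‖ ^ 2 ∂P.μ
          + 8 * P.L ^ 2 * P.σ ^ 2 * S.η ^ 2 / ((N : ℝ) * (1 - P.β ^ 2)) := by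
        have hN' : (N:ℝ) ≠ 0 := hN.ne'
        have hb' : (1:ℝ) - P.β^2 ≠ 0 := hβ2.ne'
        rw [hKdef]
        field_simp
        ring

end
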